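/- Let M = (ρ, E) be a matroid with ∅ ∈ Z(M) and E ∈ Z(M), and let k = ρ(E). Then X ⊆ E is a basis of M (i.e., ρ(X) = |X| = k) if and only if |X| = k and |X ∩ F| ≤ ρ(F) for every cyclic flat F ∈ Z(M). -/
import Mathlib


/-- A matroid given by an integer-valued rank function on subsets of a finite ground set. -/
structure RankMatroid (α : Type) [DecidableEq α] where
  E : Finset α
  rk : Finset α → ℤ
  rk_nonneg : ∀ X : Finset α, X ⊆ E → 0 ≤ rk X
  rk_le_card : ∀ X : Finset α, X ⊆ E → rk X ≤ X.card
  rk_mono : ∀ X Y : Finset α, X ⊆ Y → Y ⊆ E → rk X ≤ rk Y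
  rk_submod : ∀ X Y : Finset α, X ⊆ E → Y ⊆ E → rk (X ∪ Y) + rk (X ∩ Y) ≤ rk X + rk Y

namespace RankMatroid

variable {α : Type} [DecidableEq α]

/-- The minimum distance `d_X` of the restriction to `X`:
`d_X = min {|Y| : Y ⊆ X, ρ(X \ Y) < ρ(X)}`. -/
noncomputable def dist (M : RankMatroid α) (X : Finset α) : ℕ :=
  sInf {m : ℕ | ∃ Y : Finset α, Y ⊆ X ∧ Y.card = m ∧ M.rk (X \ Y) < M.rk X}

/-- Closure: `cl(X) = {y ∈ E : ρ(X ∪ {y}) = ρ(X)}`. -/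
def cl (M : RankMatroid α) (X : Finset α) : Finset α :=
  M.E.filter fun y => M.rk (insert y X) = M.rk X

/-- `X` is cyclic if `ρ(X \ {x}) = ρ(X)` for every `x ∈ X`. -/
def Cyclic (M : RankMatroid α) (X : Finset α) : Prop :=
  ∀ x ∈ X, M.rk (X.erase x) = M.rk X

/-- Cyclic core: `cyc(X) = {x ∈ X : ρ(X \ {x}) = ρ(X)}`. -/
def cyc (M : RankMatroid α) (X : Finset α) : Finset α :=
  X.filter fun x => M.rk (X.erase x) = M.rk X

/-- A cyclic flat is a set which is both cyclic and a flat. -/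
def IsCyclicFlat (M : RankMatroid α) (X : Finset α) : Prop :=
  X ⊆ M.E ∧ M.Cyclic X ∧ M.cl X = X

/-- `Z(M)`: the collection of cyclic flats of `M`. -/
def Z (M : RankMatroid α) : Set (Finset α) := {X | M.IsCyclicFlat X}

/-- `M` is non-degenerate: every singleton has rank at least one and `d ≥ 2`. -/
def NonDegenerate (M : RankMatroid α) : Prop :=
  (∀ x ∈ M.E, 1 ≤ M.rk {x}) ∧ 2 ≤ M.dist M.E

/-- `R` is a repair set for `x` with parameters `(r, δ)`. -/
def IsRepairSet (M : RankMatroid α) (r δ : ℤ) (x : α) (R : Finset α) : Prop :=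
  R ⊆ M.E ∧ x ∈ R ∧ (R.card : ℤ) ≤ r + δ - 1 ∧ δ ≤ (M.dist R : ℤ)

/-- The collection of cyclic flats of the restriction `M|X`. -/
def ZIn (M : RankMatroid α) (X : Finset α) : Set (Finset α) :=
  {Y | Y ⊆ X ∧ M.Cyclic Y ∧ X.filter (fun z => M.rk (insert z Y) = M.rk Y) = Y}

/-- `FX` is the meet, in the lattice `(Z(M), ⊆)`, of all cyclic flats containing `X`. -/
def IsMeetOfFlatsContaining (M : RankMatroid α) (X FX : Finset α) : Prop :=
  FX ∈ M.Z ∧ (∀ F ∈ M.Z, X ⊆ F → FX ⊆ F) ∧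
    ∀ W ∈ M.Z, (∀ F ∈ M.Z, X ⊆ F → W ⊆ F) → W ⊆ FX

lemma rk_union_le (M : RankMatroid α) {X Y : Finset α} (hX : X ⊆ M.E) (hY : Y ⊆ M.E) :
    M.rk (X ∪ Y) ≤ M.rk X + Y.card := by
  have h := M.rk_submod X Y hX hY
  have h2 := M.rk_nonneg (X ∩ Y) ((Finset.inter_subset_left).trans hX)
  have h3 := M.rk_le_card Y hY
  linarith

lemma cl_subset_E (M : RankMatroid α) (X : Finset α) : M.cl X ⊆ M.E :=
  Finset.filter_subset _ _

lemma subset_cl (M : RankMatroid α) {X : Finset α} (hX : X ⊆ M.E) : X ⊆ M.cl X := by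
  intro y hy
  simp only [cl, Finset.mem_filter]
  exact ⟨hX hy, by rw [Finset.insert_eq_self.2 hy]⟩

lemma rk_union_eq_of_subset_cl (M : RankMatroid α) {X : Finset α} (hX : X ⊆ M.E) :
    ∀ S : Finset α, S ⊆ M.cl X → M.rk (X ∪ S) = M.rk X := by
  intro S
  induction S using Finset.induction_on with
  | empty => simp
  | @insert a S ha ih =>
    intro hS
    have haE : a ∈ M.E ∧ M.rk (insert a X) = M.rk X := by
      have := hS (Finset.mem_insert_self a S)
      simpa [cl, Finset.mem_filter] using this
    have hScl : S ⊆ M.cl X := (Finset.subset_insert a S).trans hS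
    have hSE : S ⊆ M.E := hScl.trans (M.cl_subset_E X)
    have hXS : X ∪ S ⊆ M.E := Finset.union_subset hX hSE
    have hins : insert a X ⊆ M.E := Finset.insert_subset haE.1 hX
    have hsub := M.rk_submod (X ∪ S) (insert a X) hXS hins
    have hun : (X ∪ S) ∪ insert a X = X ∪ insert a S := by
      ext z; simp [Finset.mem_union, Finset.mem_insert]; tauto
    have hint : (X ∪ S) ∩ insert a X = X := by
      ext z
      simp only [Finset.mem_inter, Finset.mem_union, Finset.mem_insert]
      constructor
      · rintro ⟨hz1 | hz1, hz2 | hz2⟩ <;> first | assumption | (subst hz2; exact absurd hz1 ha)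
      · intro hz; exact ⟨Or.inl hz, Or.inr hz⟩
    rw [hun, hint, ih hScl, haE.2] at hsub
    have hmono := M.rk_mono X (X ∪ insert a S) Finset.subset_union_left
      (Finset.union_subset hX (Finset.insert_subset haE.1 hSE))
    linarith

lemma rk_cl (M : RankMatroid α) {X : Finset α} (hX : X ⊆ M.E) : M.rk (M.cl X) = M.rk X := by
  have := M.rk_union_eq_of_subset_cl hX (M.cl X) (subset_refl _)
  rwa [Finset.union_eq_right.2 (M.subset_cl hX)] at this

lemma mem_cl_iff (M : RankMatroid α) (X : Finset α) (y : α) :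
    y ∈ M.cl X ↔ y ∈ M.E ∧ M.rk (insert y X) = M.rk X := Finset.mem_filter

lemma cl_cl (M : RankMatroid α) {X : Finset α} (hX : X ⊆ M.E) : M.cl (M.cl X) = M.cl X := by
  have hclE := M.cl_subset_E X
  have hrk := M.rk_cl hX
  ext y
  rw [mem_cl_iff, mem_cl_iff]
  constructor
  · rintro ⟨hyE, hy⟩
    refine ⟨hyE, ?_⟩
    have h1 : M.rk (insert y X) ≤ M.rk (insert y (M.cl X)) :=
      M.rk_mono _ _ (Finset.insert_subset_insert _ (M.subset_cl hX))
        (Finset.insert_subset hyE hclE)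
    have h2 : M.rk X ≤ M.rk (insert y X) :=
      M.rk_mono X _ (Finset.subset_insert _ _) (Finset.insert_subset hyE hX)
    have : M.rk (insert y (M.cl X)) = M.rk X := by rw [hy, hrk]
    omega
  · rintro ⟨hyE, hy⟩
    refine ⟨hyE, ?_⟩
    have hmem : y ∈ M.cl X := (M.mem_cl_iff X y).2 ⟨hyE, hy⟩
    rw [Finset.insert_eq_self.2 hmem]

lemma cl_cyclicflat (M : RankMatroid α) {C : Finset α} (hC : C ⊆ M.E) (hcyc : M.Cyclic C) :
    M.IsCyclicFlat (M.cl C) := by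
  refine ⟨M.cl_subset_E C, ?_, M.cl_cl hC⟩
  intro x hx
  have hCcl : C ⊆ M.cl C := M.subset_cl hC
  have hClE : M.cl C ⊆ M.E := M.cl_subset_E C
  have h1 : M.rk (C.erase x) = M.rk C := by
    by_cases hxC : x ∈ C
    · exact hcyc x hxC
    · rw [Finset.erase_eq_of_notMem hxC]
  have h2 : C.erase x ⊆ (M.cl C).erase x := fun z hz => by
    rw [Finset.mem_erase] at hz ⊢
    exact ⟨hz.1, hCcl hz.2⟩
  have h3 := M.rk_mono _ _ h2 ((Finset.erase_subset _ _).trans hClE)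
  have h4 := M.rk_mono _ _ (Finset.erase_subset x (M.cl C)) hClE
  have h5 := M.rk_cl hC
  omega

end RankMatroid


/-- `X` is a basis of `M` iff `|X| = k` and `|X ∩ F| ≤ ρ(F)` for every cyclic flat `F`. -/
theorem stmt9 {α : Type} [DecidableEq α] (M : RankMatroid α)
    (h0 : ∅ ∈ M.Z) (h1 : M.E ∈ M.Z)
    (X : Finset α) (hX : X ⊆ M.E) :
    (M.rk X = (X.card : ℤ) ∧ (X.card : ℤ) = M.rk M.E) ↔
      ((X.card : ℤ) = M.rk M.E ∧ ∀ F ∈ M.Z, ((X ∩ F).card : ℤ) ≤ M.rk F) := by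
  constructor
  · rintro ⟨hind, hk⟩
    refine ⟨hk, fun F hF => ?_⟩
    obtain ⟨hFE, -, -⟩ := hF
    set A := X ∩ F with hA
    have hAX : A ⊆ X := Finset.inter_subset_left
    have hAE : A ⊆ M.E := hAX.trans hX
    have hXeq : A ∪ (X \ A) = X := Finset.union_sdiff_of_subset hAX
    have hcard : ((X \ A).card : ℤ) = (X.card : ℤ) - (A.card : ℤ) := by
      rw [Finset.card_sdiff_of_subset hAX]
      have := Finset.card_le_card hAX
      push_cast
      omega
    have h1 : M.rk X ≤ M.rk A + ((X \ A).card : ℤ) := by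
      have := M.rk_union_le hAE (show X \ A ⊆ M.E from (Finset.sdiff_subset).trans hX)
      rwa [hXeq] at this
    have h2 : M.rk A ≤ M.rk F := M.rk_mono A F Finset.inter_subset_right hFE
    have h3 : M.rk A ≤ (A.card : ℤ) := M.rk_le_card A hAE
    omega
  · rintro ⟨hk, hflats⟩
    refine ⟨?_, hk⟩
    by_contra hne
    have hlt : M.rk X < (X.card : ℤ) := lt_of_le_of_ne (M.rk_le_card X hX) hne
    -- find a minimal dependent subset C of X
    set s := X.powerset.filter (fun C => M.rk C < (C.card : ℤ)) with hs
    have hXs : X ∈ s := by simp [hs, hlt]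
    obtain ⟨C, hCs, hCmin⟩ := Finset.exists_min_image s Finset.card ⟨X, hXs⟩
    simp only [hs, Finset.mem_filter, Finset.mem_powerset] at hCs
    obtain ⟨hCX, hCdep⟩ := hCs
    have hCE : C ⊆ M.E := hCX.trans hX
    -- C is cyclic
    have hcyc : M.Cyclic C := by
      intro x hx
      have herase : M.rk (C.erase x) = ((C.erase x).card : ℤ) := by
        have hle := M.rk_le_card (C.erase x) ((Finset.erase_subset _ _).trans hCE)
        rcases lt_or_eq_of_le hle with h | h
        · exfalso
          have hmem : C.erase x ∈ s := by
            simp only [hs, Finset.mem_filter, Finset.mem_powerset]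
            exact ⟨(Finset.erase_subset _ _).trans hCX, h⟩
          have := hCmin _ hmem
          have := Finset.card_erase_lt_of_mem hx
          omega
        · exact h
      have hcarde : ((C.erase x).card : ℤ) = (C.card : ℤ) - 1 := by
        rw [Finset.card_erase_of_mem hx]
        have : 1 ≤ C.card := Finset.card_pos.2 ⟨x, hx⟩
        push_cast
        omega
      have hge := M.rk_mono (C.erase x) C (Finset.erase_subset _ _) hCE
      omega
    -- the closure of C is a cyclic flat violating the condition
    have hF : M.IsCyclicFlat (M.cl C) := M.cl_cyclicflat hCE hcyc
    have hcard : C ⊆ X ∩ M.cl C := Finset.subset_inter hCX (M.subset_cl hCE)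
    have h1 : (C.card : ℤ) ≤ ((X ∩ M.cl C).card : ℤ) := by
      exact_mod_cast Finset.card_le_card hcard
    have h2 := hflats (M.cl C) hF
    have h3 := M.rk_cl hCE
    omega
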